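/- arXiv:1711.10571 — 4 statements merged into one kernel-verified Lean document; each statement's English description precedes it below -/
import Mathlib

section
/- Fix a commutative ring R (e.g. Z/p^{m+1}Z), and let u = I_4 + E_{1,3} (the 4×4 identity matrix plus the elementary matrix with 1 in position (1,3)). Let g ∈ GL_4(R) be of the form g = [[a_1, 0, 0, 0],[0, a_4, 0, 0],[0, c, d_1, 0],[0, 0, 0, 1]] with a_1, a_4, d_1 ∈ R^×. If u g u^{-1} satisfies the symplectic condition (u g u^{-1})^T J (u g u^{-1}) = α J for some α ∈ R^×, then a_1 = d_1, a_4 = 1, c = 0, and α = a_1; in particular g = diag(a_1, 1, a_1, 1). -/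
/-!
Conjugating `g` by `u = 1 + E₁₃` gives the matrix `h` with rows
`(a₁, c, d₁ - a₁, 0), (0, a₄, 0, 0), (0, c, d₁, 0), (0, 0, 0, 1)`. Four entries of
`hᵀ J h = α J` already pin everything down: the `(1,4)`, `(2,4)`, `(3,4)` entries give
`a₁ = α`, `c = 0`, `d₁ = a₁`, and the `(2,3)` entry gives `a₄ d₁ = α`, so `a₄ = 1`.
-/

open Matrix

namespace SplitCase

variable {R : Type*} [CommRing R]

theorem unipotent_conj_eq (a b c d : R) :
    !![1,0,1,0; 0,1,0,0; 0,0,1,0; 0,0,0,1] * !![a,0,0,0; 0,b,0,0; 0,c,d,0; 0,0,0,1] *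
        !![1,0,-1,0; 0,1,0,0; 0,0,1,0; 0,0,0,1] =
      !![a,c,d - a,0; 0,b,0,0; 0,c,d,0; 0,0,0,1] := by
  ext i j
  fin_cases i <;> fin_cases j <;> simp [mul_apply, Fin.sum_univ_four, sub_eq_neg_add]

theorem entries_of_transpose_mul_J_mul_eq_smul (a b c d e α : R)
    (h : (!![a,c,e,0; 0,b,0,0; 0,c,d,0; 0,0,0,1] : Matrix (Fin 4) (Fin 4) R)ᵀ *
        !![0,0,0,1; 0,0,1,0; 0,-1,0,0; -1,0,0,0] * !![a,c,e,0; 0,b,0,0; 0,c,d,0; 0,0,0,1] =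
      α • !![0,0,0,1; 0,0,1,0; 0,-1,0,0; -1,0,0,0]) :
    a = α ∧ c = 0 ∧ e = 0 ∧ b * d = α := by
  have entry (i j : Fin 4) := congrFun (congrFun h i) j
  have h03 := entry 0 3
  have h13 := entry 1 3
  have h23 := entry 2 3
  have h12 := entry 1 2
  simp [mul_apply, Fin.sum_univ_four] at h03 h13 h23 h12
  exact ⟨h03, h13, h23, h12⟩

end SplitCase

open SplitCase in
/-- Split-case computation of Lemma A.1: with `u = I + E_{1,3}` (inverse `v = I - E_{1,3}`)
and `g = [[a₁,0,0,0],[0,a₄,0,0],[0,c,d₁,0],[0,0,0,1]]`, if `u g u⁻¹` is a symplectic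
similitude with multiplier `α`, then `a₁ = d₁`, `a₄ = 1`, `c = 0`, `α = a₁`, and
`g = diag(a₁, 1, a₁, 1)`. -/
theorem stmt_13 (R : Type*) [CommRing R] (a₁ a₄ d₁ α : Rˣ) (c : R) :
    let J : Matrix (Fin 4) (Fin 4) R := !![0,0,0,1; 0,0,1,0; 0,-1,0,0; -1,0,0,0]
    let u : Matrix (Fin 4) (Fin 4) R := !![1,0,1,0; 0,1,0,0; 0,0,1,0; 0,0,0,1]
    let v : Matrix (Fin 4) (Fin 4) R := !![1,0,-1,0; 0,1,0,0; 0,0,1,0; 0,0,0,1]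
    let gmat : Matrix (Fin 4) (Fin 4) R :=
      !![(a₁ : R),0,0,0; 0,(a₄ : R),0,0; 0,c,(d₁ : R),0; 0,0,0,1]
    u * v = 1 →
    (u * gmat * v)ᵀ * J * (u * gmat * v) = (α : R) • J →
    (a₁ : R) = (d₁ : R) ∧ (a₄ : R) = 1 ∧ c = 0 ∧ (α : R) = (a₁ : R) ∧
      gmat = Matrix.diagonal ![(a₁ : R), 1, (a₁ : R), 1] := by
  intro J u v gmat _ hsym
  rw [unipotent_conj_eq] at hsym
  obtain ⟨ha₁, hc, hd₁, hα⟩ := entries_of_transpose_mul_J_mul_eq_smul _ _ _ _ _ _ hsym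
  have hd₁a₁ : (d₁ : R) = a₁ := sub_eq_zero.mp hd₁
  have ha₄ : (a₄ : R) = 1 :=
    d₁.isUnit.mul_right_cancel (by rw [hα, one_mul, ← ha₁, hd₁a₁])
  refine ⟨hd₁a₁.symm, ha₄, hc, ha₁.symm, ?_⟩
  ext i j
  fin_cases i <;> fin_cases j <;> simp [gmat, ha₄, hc, hd₁a₁]
end

section
/- Let p be a prime inert in the imaginary quadratic field F, let O_{F_p} be the ring of integers of the completion F_p, and let e ∈ O_{F_p} be an element generating O_F/(pO_F + Z). Let u = I_4 + e·E_{1,3} + ē·E_{2,4} ∈ GL_4(O_{F_p}). Let g be a matrix over O_{F_p}/p^{m+1}O_{F_p} of the form g = [[a_1, 0, 0, 0],[0, a_4, 0, 0],[0, c_2, d_1, 0],[0, 0, 0, 1]] with a_1, a_4, d_1 units. If all entries of u g u^{-1} lie in the image of Z_p (i.e., are fixed by the conjugation ē), then a_1 = d_1, a_4 = 1, and c_2 = 0 in O_{F_p}/p^{m+1}O_{F_p}. -/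
/-
Write `ē = σ e`. Among the entries of `u g u⁻¹` are `c₂`, `e c₂`, `a₄`, `ē (1 - a₄)`, `a₁`, `d₁`
and `e (d₁ - a₁)`. If both `x` and `f x` are fixed by `σ`, then `(σ f - f) x = 0`. For `f = e`
and for `f = ē` (where `σ ē - ē = e - ē`, using `σ² = id`) this factor is a unit, which forces
`c₂ = 0`, `1 - a₄ = 0` and `d₁ - a₁ = 0`.
-/

open Matrix

theorem eq_zero_of_map_eq_self_of_map_mul_eq_self {R : Type*} [CommRing R] {σ : R →+* R}
    {f x : R} (hf : IsUnit (σ f - f)) (hx : σ x = x) (hfx : σ (f * x) = f * x) : x = 0 := by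
  rw [map_mul] at hfx
  exact hf.mul_right_eq_zero.1 (by linear_combination hfx - σ f * hx)

theorem unipotent_mul_lowerBlock_mul_unipotent_neg {R : Type*} [CommRing R] (e f a b c d : R) :
    !![1,0,e,0; 0,1,0,f; 0,0,1,0; 0,0,0,1] * !![a,0,0,0; 0,b,0,0; 0,c,d,0; 0,0,0,1] *
        !![1,0,-e,0; 0,1,0,-f; 0,0,1,0; 0,0,0,1] =
      !![a, e * c, e * (d - a), -(f * (e * c)); 0, b, 0, f * (1 - b); 0, c, d, -(f * c);
        0, 0, 0, 1] := by
  ext i j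
  fin_cases i <;> fin_cases j <;> simp [Matrix.mul_apply, Fin.sum_univ_four] <;> ring

/-- Inert-case computation of Lemma A.3: over `R = O_{F_p}/p^{m+1}` with conjugation `σ`
(an involutive ring endomorphism) and `e` with `σ e - e` a unit (as `e` generates
`O_F/(pO_F + ℤ)`), if all entries of `u g u⁻¹` are fixed by `σ` — where
`u = I + e·E_{1,3} + ē·E_{2,4}` (inverse `v = I - e·E_{1,3} - ē·E_{2,4}`) and
`g = [[a₁,0,0,0],[0,a₄,0,0],[0,c₂,d₁,0],[0,0,0,1]]` — then `a₁ = d₁`, `a₄ = 1`, `c₂ = 0`. -/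
theorem stmt_15 (R : Type*) [CommRing R] (σ : R →+* R) (hσ : ∀ x, σ (σ x) = x)
    (e : R) (he : IsUnit (σ e - e)) (a₁ a₄ d₁ : Rˣ) (c₂ : R) :
    let u : Matrix (Fin 4) (Fin 4) R := !![1,0,e,0; 0,1,0,σ e; 0,0,1,0; 0,0,0,1]
    let v : Matrix (Fin 4) (Fin 4) R := !![1,0,-e,0; 0,1,0,-(σ e); 0,0,1,0; 0,0,0,1]
    let gmat : Matrix (Fin 4) (Fin 4) R :=
      !![(a₁ : R),0,0,0; 0,(a₄ : R),0,0; 0,c₂,(d₁ : R),0; 0,0,0,1]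
    u * v = 1 →
    (∀ i j, σ ((u * gmat * v) i j) = (u * gmat * v) i j) →
    (a₁ : R) = (d₁ : R) ∧ (a₄ : R) = 1 ∧ c₂ = 0 := by
  intro u v gmat _ hfix
  rw [show u * gmat * v = _ from
    unipotent_mul_lowerBlock_mul_unipotent_neg e (σ e) _ _ c₂ _] at hfix
  have hσe : IsUnit (σ (σ e) - σ e) := by
    rw [hσ, ← neg_sub]
    exact he.neg
  have h₁₂ : σ (e * c₂) = e * c₂ := hfix 0 1
  have h₁₃ : σ (e * (d₁ - a₁ : R)) = e * (d₁ - a₁ : R) := hfix 0 2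
  have h₂₄ : σ (σ e * (1 - a₄ : R)) = σ e * (1 - a₄ : R) := hfix 1 3
  have hc₂ : σ c₂ = c₂ := hfix 2 1
  have hda : σ (d₁ - a₁ : R) = d₁ - a₁ := by
    rw [map_sub]
    exact congrArg₂ _ (hfix 2 2) (hfix 0 0)
  have ha₄ : σ (1 - a₄ : R) = 1 - a₄ := by
    rw [map_sub, map_one]
    exact congrArg _ (hfix 1 1)
  refine ⟨?_, ?_, eq_zero_of_map_eq_self_of_map_mul_eq_self he hc₂ h₁₂⟩
  · exact (sub_eq_zero.1 (eq_zero_of_map_eq_self_of_map_mul_eq_self he hda h₁₃)).symm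
  · exact (sub_eq_zero.1 (eq_zero_of_map_eq_self_of_map_mul_eq_self hσe ha₄ h₂₄)).symm
end

section
/- The index of V'_{N p^n, p^m} in V_{N p^n, p^m} equals p^{10}, where these are the congruence subgroups of GL_4(Z_p) × Z_p^× (the split-case model of GU(2,2)(Z_p)) defined by the indicated congruence conditions; a full set of left coset representatives is given by the p^{10} upper unitriangular matrices σ_v = I + p^m k_1 E_{1,2} + p^{2m} r_1 E_{1,3} + p^{3m} r_2 E_{1,4} + p^m r_3 E_{2,3} + p^{2m} r_4 E_{2,4} + p^m k_2 E_{3,4} where r_2 ranges over Z/p^3, r_1 and r_4 over Z/p^2, and k_1, r_3, k_2 over Z/p. -/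
/-!
The representative `σ_w` is the product of elementary transvections
`T₃₄(p^m k₂) T₂₃(p^m r₃) T₂₄(p^{2m} r₄) T₁₂(p^m k₁) T₁₃(p^{2m} r₁) T₁₄(p^{3m} r₂)`.
Multiplying `g` on the left by `T_{ij}(p^a c)⁻¹` subtracts `p^a c` times row `j` from row `i`.
When the exponents satisfy `e_{il} ≤ e_{ij} + e_{jl}` this keeps every congruence of `g`, and
since `g_{jj}` is a unit it strengthens the one at `(i, j)` from `p^a` to `p^{a+d}` for exactly
one digit `c mod p^d`. Strengthening the six entries above the diagonal one at a time, in the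
order of the factors, turns the level of `V` into that of `V'` and determines the digits one
after the other.
-/

open Matrix

/-- Every `g ∈ S` factors as `T c * h` with `h ∈ S'` for exactly one `c`; when `S' ⊆ S` are
groups, `T` is then a system of representatives of the left cosets of `S'` in `S`. -/
def IsCosetParametrization {M C : Type*} [Monoid M] (S S' : Set M) (T : C → M) : Prop :=
  (∀ c, IsUnit (T c)) ∧ (∀ c, ∀ h ∈ S', T c * h ∈ S) ∧ ∀ g ∈ S, ∃! c, ∃ h ∈ S', g = T c * h

namespace IsCosetParametrization

variable {M C C' : Type*} [Monoid M] {S S' S'' : Set M} {T : C → M} {T' : C' → M}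

theorem comp (hT : IsCosetParametrization S S' T) (hT' : IsCosetParametrization S' S'' T') :
    IsCosetParametrization S S'' fun c : C × C' => T c.1 * T' c.2 := by
  obtain ⟨hunit, hmaps, huniq⟩ := hT
  obtain ⟨hunit', hmaps', huniq'⟩ := hT'
  refine ⟨fun c => (hunit c.1).mul (hunit' c.2), fun c h hh => ?_, fun g hg => ?_⟩
  · rw [mul_assoc]
    exact hmaps _ _ (hmaps' _ _ hh)
  obtain ⟨c, ⟨h, hh, rfl⟩, hc⟩ := huniq g hg
  obtain ⟨c', ⟨y, hy, rfl⟩, hc'⟩ := huniq' h hh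
  refine ⟨(c, c'), ⟨y, hy, (mul_assoc _ _ _).symm⟩, ?_⟩
  rintro ⟨d, d'⟩ ⟨z, hz, hdz⟩
  rw [mul_assoc] at hdz
  obtain rfl := hc d ⟨_, hmaps' d' z hz, hdz⟩
  obtain rfl := hc' d' ⟨z, hz, (hunit d).mul_left_cancel hdz⟩
  rfl

theorem comp_equiv (hT : IsCosetParametrization S S' T) (e : C' ≃ C) :
    IsCosetParametrization S S' (T ∘ e) :=
  ⟨fun c => hT.1 (e c), fun c => hT.2.1 (e c), fun g hg =>
    e.existsUnique_congr_right.mpr (hT.2.2 g hg)⟩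

end IsCosetParametrization

section PowDvd

variable {R : Type*} [CommRing R]

theorem existsUnique_val_mul_dvd {π : R} {N d : ℕ} [NeZero N] (f : R →+* ZMod N)
    (hf : RingHom.ker f = Ideal.span {π ^ d}) {u : R} (hu : IsUnit (f u)) (z : R) :
    ∃! c : ZMod N, π ^ d ∣ z - c.val * u := by
  have key : ∀ c : ZMod N, π ^ d ∣ z - c.val * u ↔ c = f z * ↑hu.unit⁻¹ := by
    intro c
    rw [← Ideal.mem_span_singleton, ← hf, RingHom.mem_ker, map_sub, map_mul, map_natCast,
      ZMod.natCast_zmod_val, sub_eq_zero, Units.eq_mul_inv_iff_mul_eq, IsUnit.unit_spec, eq_comm]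
  exact ⟨_, (key _).2 rfl, fun c hc => (key c).1 hc⟩

theorem isUnit_map_of_pow_dvd_sub {π : R} {N d e : ℕ} (f : R →+* ZMod N)
    (hf : RingHom.ker f = Ideal.span {π ^ d}) (he : 0 < e) {x u : R} (hu : IsUnit u)
    (hx : π ^ e ∣ x - u) : IsUnit (f x) := by
  obtain ⟨t, ht⟩ := hx
  have hπ : IsNilpotent (f π) :=
    ⟨d, by rw [← map_pow, ← RingHom.mem_ker, hf]; exact Ideal.mem_span_singleton_self _⟩
  rw [← sub_add_cancel x u, ht, add_comm, map_add, map_mul, map_pow]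
  exact ((Commute.all _ _).isNilpotent_mul_right (hπ.pow_of_pos he.ne')).isUnit_add_left_of_commute
    (hu.map f) (Commute.all _ _)

theorem pow_dvd_pow_mul_mul {π : R} {a b c : ℕ} (hle : c ≤ a + b) (x : R) {y : R}
    (hy : π ^ b ∣ y) : π ^ c ∣ π ^ a * x * y :=
  (pow_dvd_pow π hle).trans (pow_add π a b ▸ mul_dvd_mul (dvd_mul_right _ x) hy)

end PowDvd

namespace Matrix

variable {R n : Type*} [CommRing R] [DecidableEq n]

def congrSet [Fintype n] (π : R) (E : n → n → ℕ) (D : Matrix n n R) : Set (Matrix n n R) :=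
  {g | IsUnit g.det ∧ ∀ i j, π ^ E i j ∣ g i j - D i j}

def tighten (E : n → n → ℕ) (i j : n) (d : ℕ) : n → n → ℕ :=
  fun k l => if k = i ∧ l = j then E i j + d else E k l

section Transvection

variable {π : R} {E : n → n → ℕ} {δ : n → R} {i j : n}

theorem tighten_of_ne {d : ℕ} {k l : n} (h : ¬(k = i ∧ l = j)) : tighten E i j d k l = E k l :=
  if_neg h

theorem le_tighten (d : ℕ) (k l : n) : E k l ≤ tighten E i j d k l := by
  unfold tighten
  split_ifs with h
  · obtain ⟨rfl, rfl⟩ := h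
    exact Nat.le_add_right _ _
  · exact le_rfl

theorem pow_dvd_transvection_row (hij : i ≠ j) (htri : ∀ l ≠ j, E i l ≤ E i j + E j l)
    {h : Matrix n n R} (hh : ∀ l, π ^ E j l ∣ h j l - diagonal δ j l) (x : R) (l : n) :
    π ^ E i l ∣ π ^ E i j * x * h j l := by
  rcases eq_or_ne l j with rfl | hl
  · exact dvd_mul_of_dvd_left (dvd_mul_right _ _) _
  · exact pow_dvd_pow_mul_mul (htri l hl) x (by simpa [diagonal_apply_ne _ hl.symm] using hh l)

theorem transvection_mul_mem_congrSet [Fintype n] (hij : i ≠ j)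
    (htri : ∀ l ≠ j, E i l ≤ E i j + E j l)
    {h : Matrix n n R} (hh : h ∈ congrSet π E (diagonal δ)) (x : R) :
    transvection i j (π ^ E i j * x) * h ∈ congrSet π E (diagonal δ) := by
  refine ⟨by rw [det_mul, det_transvection_of_ne _ _ hij, one_mul]; exact hh.1, fun k l => ?_⟩
  rcases eq_or_ne k i with rfl | hk
  · rw [transvection_mul_apply_same, add_sub_right_comm]
    exact dvd_add (hh.2 k l) (pow_dvd_transvection_row hij htri (hh.2 j) x l)
  · rw [transvection_mul_apply_of_ne _ _ _ _ hk]
    exact hh.2 k l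

end Transvection

theorem exists_mem_congrSet_tighten_iff [Fintype n] {π : R} {E : n → n → ℕ} {δ : n → R}
    {i j : n} {d : ℕ} (hij : i ≠ j) (htri : ∀ l ≠ j, E i l ≤ E i j + E j l)
    {g : Matrix n n R} (hg : g ∈ congrSet π E (diagonal δ)) (x : R) :
    (∃ h ∈ congrSet π (tighten E i j d) (diagonal δ), g = transvection i j (π ^ E i j * x) * h) ↔
      π ^ (E i j + d) ∣ g i j - π ^ E i j * x * g j j := by
  constructor
  · rintro ⟨h, hh, rfl⟩
    simpa [transvection_mul_apply_of_ne _ _ _ _ hij.symm, diagonal_apply_ne _ hij, tighten]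
      using hh.2 i j
  · intro hdvd
    refine ⟨transvection i j (-(π ^ E i j * x)) * g, ⟨?_, fun k l => ?_⟩, ?_⟩
    · rw [det_mul, det_transvection_of_ne _ _ hij, one_mul]
      exact hg.1
    · rcases eq_or_ne k i with rfl | hk
      · rw [transvection_mul_apply_same, neg_mul, ← sub_eq_add_neg]
        rcases eq_or_ne l j with rfl | hl
        · simpa [tighten, diagonal_apply_ne _ hij] using hdvd
        · rw [tighten_of_ne (fun h => hl h.2), sub_right_comm]
          exact dvd_sub (hg.2 k l) (pow_dvd_transvection_row hij htri (hg.2 j) _ l)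
      · rw [transvection_mul_apply_of_ne _ _ _ _ hk, tighten_of_ne (fun h => hk h.1)]
        exact hg.2 k l
    · rw [← mul_assoc, transvection_mul_transvection_same _ _ hij, add_neg_cancel,
        transvection_zero, one_mul]

theorem isCosetParametrization_transvection [Fintype n] [IsDomain R] {π : R} (hπ : π ≠ 0)
    {N d : ℕ} [NeZero N] (f : R →+* ZMod N) (hf : RingHom.ker f = Ideal.span {π ^ d})
    {E : n → n → ℕ} {δ : n → R} {i j : n} {a : ℕ} (hij : i ≠ j) (ha : E i j = a)
    (hδ : IsUnit (δ j)) (hE : 0 < E j j) (htri : ∀ l ≠ j, E i l ≤ E i j + E j l) :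
    IsCosetParametrization (congrSet π E (diagonal δ)) (congrSet π (tighten E i j d) (diagonal δ))
      fun c : ZMod N => transvection i j (π ^ a * c.val) := by
  subst ha
  have hsub : congrSet π (tighten E i j d) (diagonal δ) ⊆ congrSet π E (diagonal δ) :=
    fun h hh => ⟨hh.1, fun k l => (pow_dvd_pow π (le_tighten d k l)).trans (hh.2 k l)⟩
  refine ⟨fun c => (isUnit_iff_isUnit_det _).2 (by simp [hij]),
    fun c h hh => transvection_mul_mem_congrSet hij htri (hsub hh) _, fun g hg => ?_⟩
  obtain ⟨z, hz⟩ : π ^ E i j ∣ g i j := by simpa [diagonal_apply_ne _ hij] using hg.2 i j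
  have hcancel : ∀ c : ZMod N, π ^ (E i j + d) ∣ g i j - π ^ E i j * c.val * g j j ↔
      π ^ d ∣ z - c.val * g j j := by
    intro c
    rw [hz, pow_add, mul_assoc, ← mul_sub, mul_dvd_mul_iff_left (pow_ne_zero _ hπ)]
  have hunit : IsUnit (f (g j j)) :=
    isUnit_map_of_pow_dvd_sub f hf hE hδ (by simpa using hg.2 j j)
  simpa only [exists_mem_congrSet_tighten_iff hij htri hg, hcancel] using
    existsUnique_val_mul_dvd f hf hunit z

end Matrix

namespace GU22

variable {p : ℕ} [Fact p.Prime] {m n : ℕ}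

def exponentsV (m n : ℕ) : Fin 4 → Fin 4 → ℕ :=
  ![![m, m, 2*m, 3*m], ![n, m, m, 2*m], ![n, m, m, m], ![n, n, n, n]]

def exponentsV' (m n : ℕ) : Fin 4 → Fin 4 → ℕ :=
  ![![m, m+1, 2*m+2, 3*m+3], ![n, m, m+1, 2*m+2], ![n, m, m, m+1], ![n, n, n, n]]

/-- A digit vector `(r₂, r₁, r₄, k₁, r₃, k₂)`. -/
abbrev Digits (p : ℕ) : Type := ZMod (p^3) × ZMod (p^2) × ZMod (p^2) × ZMod p × ZMod p × ZMod p

noncomputable def cosetRep (p m : ℕ) [Fact p.Prime] (w : Digits p) :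
    Matrix (Fin 4) (Fin 4) ℤ_[p] :=
  !![1, (p:ℤ_[p])^m * (w.2.2.2.1.val : ℤ_[p]), (p:ℤ_[p])^(2*m) * (w.2.1.val : ℤ_[p]),
        (p:ℤ_[p])^(3*m) * (w.1.val : ℤ_[p]);
     0, 1, (p:ℤ_[p])^m * (w.2.2.2.2.1.val : ℤ_[p]),
        (p:ℤ_[p])^(2*m) * (w.2.2.1.val : ℤ_[p]);
     0, 0, 1, (p:ℤ_[p])^m * (w.2.2.2.2.2.val : ℤ_[p]);
     0, 0, 0, 1]

theorem cosetRep_eq_transvection_mul (w : Digits p) :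
    cosetRep p m w = transvection 2 3 ((p : ℤ_[p]) ^ m * w.2.2.2.2.2.val) *
      (transvection 1 2 ((p : ℤ_[p]) ^ m * w.2.2.2.2.1.val) *
      (transvection 1 3 ((p : ℤ_[p]) ^ (2 * m) * w.2.2.1.val) *
      (transvection 0 1 ((p : ℤ_[p]) ^ m * w.2.2.2.1.val) *
      (transvection 0 2 ((p : ℤ_[p]) ^ (2 * m) * w.2.1.val) *
      transvection 0 3 ((p : ℤ_[p]) ^ (3 * m) * w.1.val))))) := by
  ext k l
  fin_cases k <;> fin_cases l <;> simp [cosetRep, transvection_mul_apply_of_ne] <;>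
    simp [transvection, one_apply]

theorem isCosetParametrization_transvection_mul (hm : 0 < m) (hn : 0 < n) (α : ℤ_[p]ˣ) :
    IsCosetParametrization
      (congrSet (p : ℤ_[p]) (exponentsV m n) (diagonal ![(α : ℤ_[p]), 1, α, 1]))
      (congrSet (p : ℤ_[p]) (exponentsV' m n) (diagonal ![(α : ℤ_[p]), 1, α, 1]))
      fun c : ZMod p × ZMod p × ZMod (p^2) × ZMod p × ZMod (p^2) × ZMod (p^3) =>
        transvection 2 3 ((p : ℤ_[p]) ^ m * c.1.val) *
        (transvection 1 2 ((p : ℤ_[p]) ^ m * c.2.1.val) *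
        (transvection 1 3 ((p : ℤ_[p]) ^ (2 * m) * c.2.2.1.val) *
        (transvection 0 1 ((p : ℤ_[p]) ^ m * c.2.2.2.1.val) *
        (transvection 0 2 ((p : ℤ_[p]) ^ (2 * m) * c.2.2.2.2.1.val) *
        transvection 0 3 ((p : ℤ_[p]) ^ (3 * m) * c.2.2.2.2.2.val))))) := by
  have hp : (p : ℤ_[p]) ≠ 0 := Nat.cast_ne_zero.mpr (Fact.out : p.Prime).ne_zero
  have hker : RingHom.ker (PadicInt.toZMod : ℤ_[p] →+* ZMod p) =
      Ideal.span {(p : ℤ_[p]) ^ 1} := by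
    rw [PadicInt.ker_toZMod, PadicInt.maximalIdeal_eq_span_p, pow_one]
  have hδ : ∀ j, IsUnit (![(α : ℤ_[p]), 1, α, 1] j) := by
    intro j
    fin_cases j <;> simp
  let E₁ := tighten (exponentsV m n) 2 3 1
  let E₂ := tighten E₁ 1 2 1
  let E₃ := tighten E₂ 1 3 2
  let E₄ := tighten E₃ 0 1 1
  let E₅ := tighten E₄ 0 2 2
  have s₁ := isCosetParametrization_transvection hp _ hker (E := exponentsV m n) (i := 2) (j := 3) (a := m)
    (by decide) rfl (hδ 3) (by simpa [exponentsV] using hn)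
    (by intro l hl; fin_cases l <;> simp [exponentsV] at hl ⊢)
  have s₂ := isCosetParametrization_transvection hp _ hker (E := E₁) (i := 1) (j := 2) (a := m)
    (by decide) rfl (hδ 2) (by simpa [E₁, exponentsV, tighten] using hm)
    (by intro l hl; fin_cases l <;> simp [E₁, exponentsV, tighten] at hl ⊢; omega)
  have s₃ := isCosetParametrization_transvection hp _ (PadicInt.ker_toZModPow 2) (E := E₂)
    (i := 1) (j := 3) (a := 2 * m) (by decide) rfl (hδ 3) (by simpa [E₂, E₁, exponentsV, tighten] using hn)
    (by intro l hl; fin_cases l <;> simp [E₂, E₁, exponentsV, tighten] at hl ⊢ <;> omega)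
  have s₄ := isCosetParametrization_transvection hp _ hker (E := E₃) (i := 0) (j := 1) (a := m)
    (by decide) rfl (hδ 1) (by simpa [E₃, E₂, E₁, exponentsV, tighten] using hm)
    (by intro l hl; fin_cases l <;> simp [E₃, E₂, E₁, exponentsV, tighten] at hl ⊢ <;> omega)
  have s₅ := isCosetParametrization_transvection hp _ (PadicInt.ker_toZModPow 2) (E := E₄)
    (i := 0) (j := 2) (a := 2 * m) (by decide) rfl (hδ 2) (by simpa [E₄, E₃, E₂, E₁, exponentsV, tighten] using hm)
    (by
      intro l hl
      fin_cases l <;> simp [E₄, E₃, E₂, E₁, exponentsV, tighten] at hl ⊢ <;> omega)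
  have s₆ := isCosetParametrization_transvection hp _ (PadicInt.ker_toZModPow 3) (E := E₅)
    (i := 0) (j := 3) (a := 3 * m) (by decide) rfl (hδ 3)
    (by simpa [E₅, E₄, E₃, E₂, E₁, exponentsV, tighten] using hn)
    (by
      intro l hl
      fin_cases l <;> simp [E₅, E₄, E₃, E₂, E₁, exponentsV, tighten] at hl ⊢ <;> omega)
  have hlast : tighten E₅ 0 3 3 = exponentsV' m n := by
    funext k l
    fin_cases k <;> fin_cases l <;> simp [E₅, E₄, E₃, E₂, E₁, exponentsV, exponentsV', tighten]
  rw [← hlast]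
  convert s₁.comp (s₂.comp (s₃.comp (s₄.comp (s₅.comp s₆)))) using 2

theorem isCosetParametrization_cosetRep (hm : 0 < m) (hn : 0 < n) (α : ℤ_[p]ˣ) :
    IsCosetParametrization
      (congrSet (p : ℤ_[p]) (exponentsV m n) (diagonal ![(α : ℤ_[p]), 1, α, 1]))
      (congrSet (p : ℤ_[p]) (exponentsV' m n) (diagonal ![(α : ℤ_[p]), 1, α, 1]))
      (cosetRep p m) := by
  let reorder : Digits p ≃ ZMod p × ZMod p × ZMod (p^2) × ZMod p × ZMod (p^2) × ZMod (p^3) :=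
    { toFun := fun w => (w.2.2.2.2.2, w.2.2.2.2.1, w.2.2.1, w.2.2.2.1, w.2.1, w.1)
      invFun := fun c => (c.2.2.2.2.2, c.2.2.2.2.1, c.2.2.1, c.2.2.2.1, c.2.1, c.1)
      left_inv := fun _ => rfl
      right_inv := fun _ => rfl }
  convert (isCosetParametrization_transvection_mul hm hn α).comp_equiv reorder using 1
  funext w
  exact cosetRep_eq_transvection_mul w

end GU22

/-- The index `[V_{Np^n,p^m} : V'_{Np^n,p^m}] = p^{10}` (split-case model
`GU(2,2)(ℤ_p) ≅ GL₄(ℤ_p) × ℤ_pˣ`): every element of `V_{Np^n,p^m}` lies in exactly one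
left coset `σ_w · V'_{Np^n,p^m}`, where `σ_w` ranges over the `p^{10}` upper unitriangular
matrices `I + p^m k₁ E_{1,2} + p^{2m} r₁ E_{1,3} + p^{3m} r₂ E_{1,4} + p^m r₃ E_{2,3}
+ p^{2m} r₄ E_{2,4} + p^m k₂ E_{3,4}` with `r₂ ∈ ℤ/p³`, `r₁, r₄ ∈ ℤ/p²`,
`k₁, r₃, k₂ ∈ ℤ/p`. -/
theorem stmt_16 (p : ℕ) [Fact p.Prime] (n m : ℕ) (hm : 1 ≤ m) (hn : 3 * m + 3 ≤ n) :
    let e : Fin 4 → Fin 4 → ℕ :=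
      ![![m, m, 2*m, 3*m], ![n, m, m, 2*m], ![n, m, m, m], ![n, n, n, n]]
    let e' : Fin 4 → Fin 4 → ℕ :=
      ![![m, m+1, 2*m+2, 3*m+3], ![n, m, m+1, 2*m+2], ![n, m, m, m+1], ![n, n, n, n]]
    let Dmat : ℤ_[p]ˣ → Matrix (Fin 4) (Fin 4) ℤ_[p] :=
      fun α => Matrix.diagonal ![(α : ℤ_[p]), 1, (α : ℤ_[p]), 1]
    let SV : Set (Matrix (Fin 4) (Fin 4) ℤ_[p] × ℤ_[p]ˣ) :=
      {x | IsUnit x.1.det ∧ ∀ i j, (p : ℤ_[p]) ^ (e i j) ∣ (x.1 i j - Dmat x.2 i j)}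
    let SV' : Set (Matrix (Fin 4) (Fin 4) ℤ_[p] × ℤ_[p]ˣ) :=
      {x | IsUnit x.1.det ∧ ∀ i j, (p : ℤ_[p]) ^ (e' i j) ∣ (x.1 i j - Dmat x.2 i j)}
    let W := ZMod (p^3) × ZMod (p^2) × ZMod (p^2) × ZMod p × ZMod p × ZMod p
    let σ : W → Matrix (Fin 4) (Fin 4) ℤ_[p] := fun w =>
      !![1, (p:ℤ_[p])^m * (w.2.2.2.1.val : ℤ_[p]), (p:ℤ_[p])^(2*m) * (w.2.1.val : ℤ_[p]),
            (p:ℤ_[p])^(3*m) * (w.1.val : ℤ_[p]);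
         0, 1, (p:ℤ_[p])^m * (w.2.2.2.2.1.val : ℤ_[p]),
            (p:ℤ_[p])^(2*m) * (w.2.2.1.val : ℤ_[p]);
         0, 0, 1, (p:ℤ_[p])^m * (w.2.2.2.2.2.val : ℤ_[p]);
         0, 0, 0, 1]
    (∀ x ∈ SV, ∃! w : W, ∃ y ∈ SV', x.1 = σ w * y.1 ∧ x.2 = y.2) ∧
      Nat.card W = p ^ 10 := by
  intro e e' Dmat SV SV' W σ
  refine ⟨fun ⟨g, α⟩ hx => ?_, ?_⟩
  · have hrep := (GU22.isCosetParametrization_cosetRep hm (by omega) α).2.2 g hx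
    refine (existsUnique_congr fun w => ?_).mp hrep
    constructor
    · rintro ⟨h, hh, hg⟩
      exact ⟨(h, α), hh, hg, rfl⟩
    · rintro ⟨⟨h, β⟩, hh, hg, rfl⟩
      exact ⟨h, hh, hg⟩
  · simp only [W, Nat.card_prod, Nat.card_zmod]
    ring
end

section
/- Let G be a group acting on a set Y on the right without fixed points (i.e., y·v = y implies v = 1), let U ⊆ V ⊆ G be subgroups, and let z, z' ∈ Y. If z = z'·u for some u ∈ U and z = z'·v for some v ∈ W, where W ⊆ G is any subset, then v = u ∈ U. Consequently, if the quotient map Y/U → Y/V is injective and V acts freely, then for any subgroup V₁ ⊆ V with U₁ := V₁ ∩ H ⊆ U (for H a subgroup containing U), the map Y_H/U₁ → Y/V₁ is injective whenever Y_H/U → Y/V is. -/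
/-!
Freeness makes the element relating two points of one orbit unique. Hence if `z = z'·v` with
`v ∈ V₁ ≤ V`, the element `u ∈ U` that injectivity of `Y/U → Y/V` provides must be `v` itself,
so `v ∈ V₁ ∩ U ⊆ V₁ ∩ H`.
-/

section FreeRightAction

variable {G Y : Type*} [Group G] {act : Y → G → Y}

theorem eq_of_act_eq_of_free (hact_one : ∀ y, act y 1 = y)
    (hact_mul : ∀ (y : Y) (g h : G), act (act y g) h = act y (g * h))
    (hfree : ∀ (y : Y) (v : G), act y v = y → v = 1) {y : Y} {g h : G}
    (hgh : act y g = act y h) : g = h := by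
  have hfix : act y (g * h⁻¹) = y := by
    rw [← hact_mul, hgh, hact_mul, mul_inv_cancel, hact_one]
  exact mul_inv_eq_one.mp (hfree y _ hfix)

theorem exists_mem_inf_act_eq_of_free (hact_one : ∀ y, act y 1 = y)
    (hact_mul : ∀ (y : Y) (g h : G), act (act y g) h = act y (g * h))
    (hfree : ∀ (y : Y) (v : G), act y v = y → v = 1) {U V H V₁ : Subgroup G}
    (hUH : U ≤ H) (hV₁ : V₁ ≤ V)
    (hinj : ∀ z z' : Y, (∃ v ∈ V, act z' v = z) → ∃ u ∈ U, act z' u = z)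
    {z z' : Y} {v : G} (hv : v ∈ V₁) (hvz : act z' v = z) :
    ∃ u ∈ V₁ ⊓ H, act z' u = z := by
  obtain ⟨u, hu, huz⟩ := hinj z z' ⟨v, hV₁ hv, hvz⟩
  have hvu : v = u := eq_of_act_eq_of_free hact_one hact_mul hfree (hvz.trans huz.symm)
  exact ⟨v, ⟨hv, hUH (hvu ▸ hu)⟩, hvz⟩

end FreeRightAction

theorem stmt_18_general (G : Type*) [Group G] (Y : Type*) (act : Y → G → Y)
    (hact_one : ∀ y, act y 1 = y)
    (hact_mul : ∀ (y : Y) (g h : G), act (act y g) h = act y (g * h))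
    (hfree : ∀ (y : Y) (v : G), act y v = y → v = 1)
    (U V H V₁ : Subgroup G) (hUH : U ≤ H) (hV₁ : V₁ ≤ V) :
    (∀ (z z' : Y) (u v : G), u ∈ U → act z' u = z → act z' v = z → v = u ∧ v ∈ U) ∧
      ((∀ z z' : Y, (∃ v ∈ V, act z' v = z) → ∃ u ∈ U, act z' u = z) →
        ∀ z z' : Y, (∃ v ∈ V₁, act z' v = z) → ∃ u ∈ V₁ ⊓ H, act z' u = z) := by
  refine ⟨fun z z' u v hu huz hvz => ?_, fun hinj z z' ⟨v, hv, hvz⟩ => ?_⟩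
  · have hvu : v = u := eq_of_act_eq_of_free hact_one hact_mul hfree (hvz.trans huz.symm)
    exact ⟨hvu, hvu ▸ hu⟩
  · exact exists_mem_inf_act_eq_of_free hact_one hact_mul hfree hUH hV₁ hinj hv hvz

/-- For a fixed-point-free right action of a group `G` on a set `Y`: if `z = z'·u` with
`u ∈ U` and `z = z'·v`, then `v = u ∈ U`. Consequently, for subgroups `U ≤ V`, `U ≤ H`,
`V₁ ≤ V` with `V₁ ⊓ H ≤ U`, if the map `Y/U → Y/V` is injective (every `V`-relation
between points is realised in `U`), then so is `Y/(V₁ ⊓ H) → Y/V₁`. -/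
theorem stmt_18 (G : Type*) [Group G] (Y : Type*) (act : Y → G → Y)
    (hact_one : ∀ y, act y 1 = y)
    (hact_mul : ∀ (y : Y) (g h : G), act (act y g) h = act y (g * h))
    (hfree : ∀ (y : Y) (v : G), act y v = y → v = 1)
    (U V H V₁ : Subgroup G) (hUV : U ≤ V) (hUH : U ≤ H) (hV₁ : V₁ ≤ V)
    (hU₁ : V₁ ⊓ H ≤ U) :
    (∀ (z z' : Y) (u v : G), u ∈ U → act z' u = z → act z' v = z → v = u ∧ v ∈ U) ∧
      ((∀ z z' : Y, (∃ v ∈ V, act z' v = z) → ∃ u ∈ U, act z' u = z) →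
        ∀ z z' : Y, (∃ v ∈ V₁, act z' v = z) → ∃ u ∈ V₁ ⊓ H, act z' u = z) :=
  stmt_18_general G Y act hact_one hact_mul hfree U V H V₁ hUH hV₁
end
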